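/- arXiv:2311.01325 — 4 statements merged into one kernel-verified Lean document; each statement's English description precedes it below -/
import Mathlib

section
/- Let f : Set X → Set X be monotone. If f is b-compatible (i.e., f (b S) ⊆ b (f S) for every S : Set X), then f is b-sound: gfp (b ∘ f) ⊆ gfp b. -/
variable {X : Type*}

/-- The greatest fixed point of a monotone function on sets: union of all post-fixed points. -/
def gfp (h : Set X → Set X) : Set X := ⋃₀ {S | S ⊆ h S}

/-- `f` progresses to `g` with respect to `b`. -/
def Progresses (b f g : Set X → Set X) : Prop := ∀ S, f (b S) ⊆ b (g S)

/-- `f` is `b`-compatible: `f` progresses to itself. -/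
def Compatible (b f : Set X → Set X) : Prop := Progresses b f f

/-- The companion of `b`: pointwise join of all monotone `b`-compatible functions. -/
def companion (b : Set X → Set X) (S : Set X) : Set X :=
  ⋃₀ {T | ∃ f : Set X → Set X, Monotone f ∧ Compatible b f ∧ T = f S}

lemma gfp_unfold {h : Set X → Set X} (hh : Monotone h) : gfp h ⊆ h (gfp h) := by
  intro x hx
  obtain ⟨S, hS, hxS⟩ := hx
  have hSg : S ⊆ gfp h := fun y hy => Set.mem_sUnion.2 ⟨S, hS, hy⟩
  exact hh hSg (hS hxS)

theorem compatible_implies_sound {X : Type*} (b f : Set X → Set X)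
    (hb : Monotone b) (hf : Monotone f) (hcompat : Compatible b f) :
    gfp (b ∘ f) ⊆ gfp b := by
  set ν := gfp (b ∘ f) with hν
  have hν1 : ν ⊆ b (f ν) := gfp_unfold (hb.comp hf)
  have key : ∀ n, f^[n] ν ⊆ b (f^[n+1] ν) := by
    intro n
    induction n with
    | zero => simpa using hν1
    | succ n ih =>
      calc f^[n+1] ν = f (f^[n] ν) := Function.iterate_succ_apply' f n ν
        _ ⊆ f (b (f^[n+1] ν)) := hf ih
        _ ⊆ b (f (f^[n+1] ν)) := hcompat _
        _ = b (f^[n+2] ν) := by rw [← Function.iterate_succ_apply' f (n+1) ν]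
  have hU : (⋃ n, f^[n] ν) ⊆ b (⋃ n, f^[n] ν) := by
    intro x hx
    obtain ⟨_, ⟨n, rfl⟩, hxn⟩ := hx
    exact hb (Set.subset_iUnion (fun n => f^[n] ν) (n+1)) (key n hxn)
  intro x hx
  exact ⟨⋃ n, f^[n] ν, hU, Set.mem_iUnion.2 ⟨0, hx⟩⟩
end

section
/- The companion t of b is itself monotone and b-compatible: for all S, T : Set X, S ⊆ T implies t S ⊆ t T, and t (b S) ⊆ b (t S) for every S : Set X. -/
variable {X : Type*}

theorem companion_monotone_compatible {X : Type*} (b : Set X → Set X) (hb : Monotone b) :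
    (∀ S T : Set X, S ⊆ T → companion b S ⊆ companion b T) ∧
    (∀ S : Set X, companion b (b S) ⊆ b (companion b S)) := by
  constructor
  · intro S T hST x hx
    obtain ⟨U, ⟨f, hf, hfc, rfl⟩, hxU⟩ := hx
    exact ⟨f T, ⟨f, hf, hfc, rfl⟩, hf hST hxU⟩
  · intro S x hx
    obtain ⟨U, ⟨f, hf, hfc, rfl⟩, hxU⟩ := hx
    have h1 : f (b S) ⊆ b (f S) := hfc S
    have h2 : f S ⊆ companion b S := fun y hy => ⟨f S, ⟨f, hf, hfc, rfl⟩, hy⟩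
    exact hb h2 (h1 hxU)
end

section
/- The companion t of b contains the identity and is idempotent: S ⊆ t S for every S : Set X, and t (t S) ⊆ t S for every S : Set X. -/
variable {X : Type*}

lemma le_companion_of {b f : Set X → Set X} (hf : Monotone f) (hc : Compatible b f)
    (S : Set X) : f S ⊆ companion b S :=
  fun x hx => ⟨f S, ⟨f, hf, hc, rfl⟩, hx⟩

lemma companion_mono (b : Set X → Set X) : Monotone (companion b) := by
  intro S T hST x hx
  obtain ⟨_, ⟨f, hf, hc, rfl⟩, hx⟩ := hx
  exact ⟨f T, ⟨f, hf, hc, rfl⟩, hf hST hx⟩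

lemma companion_compatible (b : Set X → Set X) (hb : Monotone b) :
    Compatible b (companion b) := by
  intro S x hx
  obtain ⟨_, ⟨f, hf, hc, rfl⟩, hx⟩ := hx
  exact hb (le_companion_of hf hc S) (hc S hx)

theorem companion_id_idem {X : Type*} (b : Set X → Set X) (hb : Monotone b) :
    (∀ S : Set X, S ⊆ companion b S) ∧
    (∀ S : Set X, companion b (companion b S) ⊆ companion b S) := by
  constructor
  · intro S
    exact le_companion_of (b := b) monotone_id (fun T => le_rfl) S
  · intro S
    have hmono : Monotone (fun T => companion b (companion b T)) :=
      fun A B h => companion_mono b (companion_mono b h)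
    have hcomp : Compatible b (fun T => companion b (companion b T)) := by
      intro T
      calc companion b (companion b (b T))
          ⊆ companion b (b (companion b T)) :=
            companion_mono b (companion_compatible b hb T)
        _ ⊆ b (companion b (companion b T)) := companion_compatible b hb _
    exact le_companion_of hmono hcomp S
end

section
/- Let f : Set X → Set X be monotone and suppose f progresses to f^ω, i.e., f (b S) ⊆ b (f^ω S) for every S : Set X. Then f is b-sound: gfp (b ∘ f) ⊆ gfp b. -/
variable {X : Type*}

/-- `f^ω S = ⋃ n, f^[n] S`. -/
def omegaIter (f : Set X → Set X) (S : Set X) : Set X := ⋃ n : ℕ, f^[n] S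

theorem progress_omega_sound {X : Type*} (b f : Set X → Set X)
    (hb : Monotone b) (hf : Monotone f)
    (h : ∀ S : Set X, f (b S) ⊆ b (omegaIter f S)) :
    gfp (b ∘ f) ⊆ gfp b := by
  -- the f-closure
  set cl : Set X → Set X := fun S => ⋂₀ {T | S ⊆ T ∧ f T ⊆ T} with hcl
  have cl_le : ∀ S T : Set X, S ⊆ T → f T ⊆ T → cl S ⊆ T := by
    intro S T h1 h2
    exact Set.sInter_subset_of_mem ⟨h1, h2⟩
  have le_cl : ∀ S : Set X, S ⊆ cl S := by
    intro S x hx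
    exact Set.mem_sInter.mpr fun T hT => hT.1 hx
  have f_cl : ∀ S : Set X, f (cl S) ⊆ cl S := by
    intro S x hx
    refine Set.mem_sInter.mpr fun T hT => ?_
    exact hT.2 (hf (Set.sInter_subset_of_mem hT) hx)
  have cl_mono : Monotone cl := by
    intro S T hST
    exact cl_le S (cl T) (hST.trans (le_cl T)) (f_cl T)
  have cl_idem : ∀ S : Set X, cl (cl S) ⊆ cl S :=
    fun S => cl_le _ _ (le_refl _) (f_cl S)
  -- f^ω (cl S) ⊆ cl S
  have omega_cl : ∀ S : Set X, omegaIter f (cl S) ⊆ cl S := by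
    intro S x hx
    obtain ⟨_, ⟨n, rfl⟩, hx⟩ := hx
    revert x
    induction n with
    | zero => exact fun x hx => hx
    | succ k ih =>
      intro x hx
      simp only [Function.iterate_succ_apply'] at hx
      exact f_cl S (hf ih hx)
  -- cl is b-compatible
  have cl_compat : ∀ S : Set X, cl (b S) ⊆ b (cl S) := by
    intro S
    refine cl_le _ _ (hb (le_cl S)) ?_
    exact (h (cl S)).trans (hb (omega_cl S))
  -- gfp (b ∘ f) is a post-fixed point
  set G := gfp (b ∘ f) with hG
  have hGpost : G ⊆ b (f G) := by
    intro x hx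
    obtain ⟨T, hT, hxT⟩ := hx
    have hTG : T ⊆ G := fun y hy => ⟨T, hT, hy⟩
    exact hb (hf hTG) (hT hxT)
  -- cl G is a post-fixed point of b containing G
  have key : cl G ⊆ b (cl G) := by
    calc cl G ⊆ cl (b (f G)) := cl_mono hGpost
      _ ⊆ b (cl (f G)) := cl_compat (f G)
      _ ⊆ b (cl G) := hb ((cl_mono (fun y hy => f_cl G (hf (le_cl G) hy))).trans (cl_idem G))
  exact fun x hx => ⟨cl G, key, le_cl G hx⟩
end
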